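/- The quotient module Q := (M ⊗_A M')/N is generated as an A-module by the images of the elements e_{2j} ⊗ e'_{nk} over all mixed pairs (j, k); moreover, in Q the following identities hold for every mixed pair (j, k): the image of e_{1j} ⊗ e'_{1k} equals π times the image of e_{2j} ⊗ e'_{nk}, and for every 2 ≤ i ≤ n the image of e_{ij} ⊗ e'_{(n+2−i)k} equals the image of e_{2j} ⊗ e'_{nk} (where one sets e'_{(n+1)k} := e'_{1k}). -/
import Mathlib


open TensorProduct

noncomputable section

/-- The diagonal operator `X_a` on `M`: `X_a e_{ij} = τ^{i-1}(a)·e_{ij}` if `j ≤ p` and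
`X_a e_{ij} = τ^{i-1}(ā)·e_{ij}` if `j > p` (indices zero-based). -/
def Xop {A : Type*} [CommRing A] (n r p : ℕ) (τ c : A ≃+* A) (a : A)
    (w : Fin n × Fin r → A) : Fin n × Fin r → A :=
  fun ij => (if (ij.2 : ℕ) < p then (⇑τ)^[(ij.1 : ℕ)] a else (⇑τ)^[(ij.1 : ℕ)] (c a)) * w ij

/-- The shift operator `U` on `M`: `U e_{1j} = π·e_{nj}` and `U e_{ij} = e_{(i-1)j}` for
`2 ≤ i ≤ n`, written in coordinates. -/
def Uop {A : Type*} [CommRing A] (n r : ℕ) (π : A)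
    (w : Fin n × Fin r → A) : Fin n × Fin r → A :=
  fun ij =>
    if h : (ij.1 : ℕ) + 1 < n then w (⟨(ij.1 : ℕ) + 1, h⟩, ij.2)
    else π * w (⟨0, ij.1.pos⟩, ij.2)

/-- The diagonal operator `X'_a` on `M'`: `X'_a e'_{ij} = τ^{n+1-i}(ā)·e'_{ij}` if `j ≤ p`
and `X'_a e'_{ij} = τ^{n+1-i}(a)·e'_{ij}` if `j > p` (indices zero-based; `τ^n = id`). -/
def X'op {A : Type*} [CommRing A] (n r p : ℕ) (τ c : A ≃+* A) (a : A)
    (w : Fin n × Fin r → A) : Fin n × Fin r → A :=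
  fun ij =>
    (if (ij.2 : ℕ) < p then (⇑τ)^[n - (ij.1 : ℕ)] (c a) else (⇑τ)^[n - (ij.1 : ℕ)] a) * w ij

/-- The shift operator `U'` on `M'`: `U' e'_{1j} = π·e'_{nj}` and `U' e'_{ij} = e'_{(i-1)j}`
for `2 ≤ i ≤ n`, written in coordinates. -/
def U'op {A : Type*} [CommRing A] (n r : ℕ) (π : A)
    (w : Fin n × Fin r → A) : Fin n × Fin r → A :=
  fun ij =>
    if h : (ij.1 : ℕ) + 1 < n then w (⟨(ij.1 : ℕ) + 1, h⟩, ij.2)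
    else π * w (⟨0, ij.1.pos⟩, ij.2)

/-- The submodule `N ⊆ M ⊗_A M'` generated by the elements `(X_a m) ⊗ m' - m ⊗ (X'_a m')`
and `(U m) ⊗ m' - m ⊗ (U' m')`. -/
def relN {A : Type*} [CommRing A] (n r p : ℕ) (τ c : A ≃+* A) (π : A) :
    Submodule A ((Fin n × Fin r → A) ⊗[A] (Fin n × Fin r → A)) :=
  Submodule.span A
    ({x | ∃ (a : A) (m m' : Fin n × Fin r → A),
        x = (Xop n r p τ c a m) ⊗ₜ[A] m' - m ⊗ₜ[A] (X'op n r p τ c a m')} ∪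
      {x | ∃ m m' : Fin n × Fin r → A,
        x = (Uop n r π m) ⊗ₜ[A] m' - m ⊗ₜ[A] (U'op n r π m')})

/-- A pair `(j, k)` is mixed if `j ≤ p < k` or `k ≤ p < j` (zero-based: `j < p ≤ k` or
`k < p ≤ j`). -/
def MixedPair (p : ℕ) {r : ℕ} (j k : Fin r) : Prop :=
  ((j : ℕ) < p ∧ p ≤ (k : ℕ)) ∨ ((k : ℕ) < p ∧ p ≤ (j : ℕ))


/-- The quotient module `Q = (M ⊗_A M')/N`. -/
abbrev quotQ {A : Type*} [CommRing A] (n r p : ℕ) (τ c : A ≃+* A) (π : A) :=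
  ((Fin n × Fin r → A) ⊗[A] (Fin n × Fin r → A)) ⧸ relN n r p τ c π

section Aux

variable {A : Type*} [CommRing A] {n r p : ℕ} (τ c : A ≃+* A) (π : A)

lemma Xop_single (a : A) (i : Fin n) (j : Fin r) :
    Xop n r p τ c a (Pi.single (i, j) (1 : A)) =
      (if (j : ℕ) < p then (⇑τ)^[(i : ℕ)] a else (⇑τ)^[(i : ℕ)] (c a)) •
        (Pi.single (i, j) (1 : A) : Fin n × Fin r → A) := by
  funext x
  rcases eq_or_ne x (i, j) with rfl | h
  · simp [Xop]
  · simp [Xop, Pi.single_eq_of_ne h]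

lemma X'op_single (a : A) (i : Fin n) (k : Fin r) :
    X'op n r p τ c a (Pi.single (i, k) (1 : A)) =
      (if (k : ℕ) < p then (⇑τ)^[n - (i : ℕ)] (c a) else (⇑τ)^[n - (i : ℕ)] a) •
        (Pi.single (i, k) (1 : A) : Fin n × Fin r → A) := by
  funext x
  rcases eq_or_ne x (i, k) with rfl | h
  · simp [X'op]
  · simp [X'op, Pi.single_eq_of_ne h]

lemma Uop_single_succ (i : ℕ) (h : i + 1 < n) (j : Fin r) :
    Uop n r π (Pi.single ((⟨i + 1, h⟩ : Fin n), j) (1 : A)) =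
      Pi.single ((⟨i, by omega⟩ : Fin n), j) (1 : A) := by
  funext x
  obtain ⟨⟨a, ha⟩, b⟩ := x
  rcases eq_or_ne b j with rfl | hb
  · simp only [Uop, Pi.single_apply, Prod.mk.injEq, Fin.mk.injEq, and_true]
    split_ifs <;> first | rfl | omega | simp_all | (exfalso; omega)
  · simp only [Uop]
    split_ifs <;> simp [Pi.single_apply, Prod.ext_iff, hb]

lemma Uop_single_zero (hn : 0 < n) (j : Fin r) :
    Uop n r π (Pi.single ((⟨0, hn⟩ : Fin n), j) (1 : A)) =
      π • (Pi.single ((⟨n - 1, by omega⟩ : Fin n), j) (1 : A) : Fin n × Fin r → A) := by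
  funext x
  obtain ⟨⟨a, ha⟩, b⟩ := x
  rcases eq_or_ne b j with rfl | hb
  · simp only [Uop, Pi.single_apply, Prod.mk.injEq, Fin.mk.injEq, and_true,
      Pi.smul_apply, smul_eq_mul]
    split_ifs <;> first | rfl | omega | simp_all | (exfalso; omega)
  · simp only [Uop, Pi.smul_apply, smul_eq_mul]
    split_ifs <;> simp [Pi.single_apply, Prod.ext_iff, hb]

lemma Xrel (a : A) (m m' : Fin n × Fin r → A) :
    (Submodule.Quotient.mk ((Xop n r p τ c a m) ⊗ₜ[A] m') : quotQ n r p τ c π) =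
      Submodule.Quotient.mk (m ⊗ₜ[A] (X'op n r p τ c a m')) := by
  rw [Submodule.Quotient.eq]
  exact Submodule.subset_span (Or.inl ⟨a, m, m', rfl⟩)

lemma Urel (m m' : Fin n × Fin r → A) :
    (Submodule.Quotient.mk ((Uop n r π m) ⊗ₜ[A] m') : quotQ n r p τ c π) =
      Submodule.Quotient.mk (m ⊗ₜ[A] (U'op n r π m')) := by
  rw [Submodule.Quotient.eq]
  exact Submodule.subset_span (Or.inr ⟨m, m', rfl⟩)

lemma kill (a : A) (i i' : Fin n) (j k : Fin r) :
    ((if (j : ℕ) < p then (⇑τ)^[(i : ℕ)] a else (⇑τ)^[(i : ℕ)] (c a)) -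
      (if (k : ℕ) < p then (⇑τ)^[n - (i' : ℕ)] (c a) else (⇑τ)^[n - (i' : ℕ)] a)) •
      (Submodule.Quotient.mk ((Pi.single (i, j) (1 : A) : Fin n × Fin r → A) ⊗ₜ[A]
        (Pi.single (i', k) (1 : A) : Fin n × Fin r → A)) : quotQ n r p τ c π) = 0 := by
  rw [sub_smul, sub_eq_zero]
  calc (if (j : ℕ) < p then (⇑τ)^[(i : ℕ)] a else (⇑τ)^[(i : ℕ)] (c a)) •
      (Submodule.Quotient.mk ((Pi.single (i, j) (1 : A) : Fin n × Fin r → A) ⊗ₜ[A]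
        (Pi.single (i', k) (1 : A) : Fin n × Fin r → A)) : quotQ n r p τ c π)
      = Submodule.Quotient.mk ((Xop n r p τ c a (Pi.single (i, j) 1)) ⊗ₜ[A]
          (Pi.single (i', k) (1 : A) : Fin n × Fin r → A)) := by
        rw [Xop_single, ← Submodule.Quotient.mk_smul, ← smul_tmul']
    _ = Submodule.Quotient.mk ((Pi.single (i, j) (1 : A) : Fin n × Fin r → A) ⊗ₜ[A]
          (X'op n r p τ c a (Pi.single (i', k) 1))) := Xrel τ c π a _ _
    _ = _ := by rw [X'op_single, tmul_smul, Submodule.Quotient.mk_smul]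

end Aux

/-- The quotient `Q = (M ⊗_A M')/N` is generated by the images of `e_{2j} ⊗ e'_{nk}` over
mixed pairs `(j,k)`; moreover in `Q` one has `e_{1j} ⊗ e'_{1k} = π·(e_{2j} ⊗ e'_{nk})` and
`e_{ij} ⊗ e'_{(n+2-i)k} = e_{2j} ⊗ e'_{nk}` for all `2 ≤ i ≤ n` and mixed `(j,k)`. -/
theorem statement19 {A : Type*} [CommRing A] (n r p : ℕ)
    (hn : 2 ≤ n) (hr : 2 ≤ r) (hp : 1 ≤ p) (hpr : p < r)
    (τ c : A ≃+* A) (hτn : ∀ a, (⇑τ)^[n] a = a)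
    (hc : ∀ a, c (c a) = a) (hcτ : ∀ a, c (τ a) = τ (c a))
    (π : A) (hπ : τ π = π)
    (hx : ∃ x : A, ∀ (i i' : Fin n) (b b' : Bool), (i, b) ≠ (i', b') →
      (⇑τ)^[(i : ℕ)] (bif b then c x else x) ≠ (⇑τ)^[(i' : ℕ)] (bif b' then c x else x) ∧
      IsUnit ((⇑τ)^[(i : ℕ)] (bif b then c x else x) -
        (⇑τ)^[(i' : ℕ)] (bif b' then c x else x))) :
    Submodule.span A
      {x : quotQ n r p τ c π | ∃ j k : Fin r, MixedPair p j k ∧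
        x = Submodule.Quotient.mk
          ((Pi.single ((⟨1, by omega⟩ : Fin n), j) (1 : A)) ⊗ₜ[A]
            (Pi.single ((⟨n - 1, by omega⟩ : Fin n), k) (1 : A)))} = ⊤ ∧
    (∀ j k : Fin r, MixedPair p j k →
      (Submodule.Quotient.mk
          ((Pi.single ((⟨0, by omega⟩ : Fin n), j) (1 : A)) ⊗ₜ[A]
            (Pi.single ((⟨0, by omega⟩ : Fin n), k) (1 : A)))
        : quotQ n r p τ c π) =
      π • Submodule.Quotient.mk
          ((Pi.single ((⟨1, by omega⟩ : Fin n), j) (1 : A)) ⊗ₜ[A]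
            (Pi.single ((⟨n - 1, by omega⟩ : Fin n), k) (1 : A)))) ∧
    (∀ j k : Fin r, MixedPair p j k → ∀ (i : Fin n) (hi : 1 ≤ (i : ℕ)),
      (Submodule.Quotient.mk
          ((Pi.single (i, j) (1 : A)) ⊗ₜ[A]
            (Pi.single ((⟨n - (i : ℕ), Nat.sub_lt (by omega) hi⟩ : Fin n), k) (1 : A)))
        : quotQ n r p τ c π) =
      Submodule.Quotient.mk
          ((Pi.single ((⟨1, by omega⟩ : Fin n), j) (1 : A)) ⊗ₜ[A]
            (Pi.single ((⟨n - 1, by omega⟩ : Fin n), k) (1 : A)))) := by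
  obtain ⟨x, hxu⟩ := hx
  -- part 2
  have part2 : ∀ j k : Fin r,
      (Submodule.Quotient.mk
          ((Pi.single ((⟨0, by omega⟩ : Fin n), j) (1 : A)) ⊗ₜ[A]
            (Pi.single ((⟨0, by omega⟩ : Fin n), k) (1 : A)))
        : quotQ n r p τ c π) =
      π • Submodule.Quotient.mk
          ((Pi.single ((⟨1, by omega⟩ : Fin n), j) (1 : A)) ⊗ₜ[A]
            (Pi.single ((⟨n - 1, by omega⟩ : Fin n), k) (1 : A))) := by
    intro j k
    have h1 := Urel (n := n) (r := r) (p := p) τ c π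
      (Pi.single ((⟨1, by omega⟩ : Fin n), j) (1 : A))
      (Pi.single ((⟨0, by omega⟩ : Fin n), k) (1 : A))
    rw [show Uop n r π (Pi.single ((⟨1, by omega⟩ : Fin n), j) (1 : A)) =
        Pi.single ((⟨0, by omega⟩ : Fin n), j) (1 : A) from
        Uop_single_succ π 0 (by omega) j] at h1
    rw [show U'op n r π (Pi.single ((⟨0, by omega⟩ : Fin n), k) (1 : A)) =
        π • (Pi.single ((⟨n - 1, by omega⟩ : Fin n), k) (1 : A) : Fin n × Fin r → A) from
        Uop_single_zero π (by omega) k] at h1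
    rw [tmul_smul, Submodule.Quotient.mk_smul] at h1
    exact h1
  -- part 3
  have part3 : ∀ (j k : Fin r) (ii : ℕ) (h1 : 1 ≤ ii) (h2 : ii < n),
      (Submodule.Quotient.mk
          ((Pi.single ((⟨ii, h2⟩ : Fin n), j) (1 : A)) ⊗ₜ[A]
            (Pi.single ((⟨n - ii, by omega⟩ : Fin n), k) (1 : A)))
        : quotQ n r p τ c π) =
      Submodule.Quotient.mk
          ((Pi.single ((⟨1, by omega⟩ : Fin n), j) (1 : A)) ⊗ₜ[A]
            (Pi.single ((⟨n - 1, by omega⟩ : Fin n), k) (1 : A))) := by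
    intro j k ii h1
    induction ii, h1 using Nat.le_induction with
    | base => intro h2; rfl
    | succ ii hii IH =>
      intro h2
      have IH' := IH (by omega)
      have h1 := Urel (n := n) (r := r) (p := p) τ c π
        (Pi.single ((⟨ii + 1, h2⟩ : Fin n), j) (1 : A))
        (Pi.single ((⟨n - ii, by omega⟩ : Fin n), k) (1 : A))
      rw [Uop_single_succ π ii h2 j] at h1
      rw [show ((⟨n - ii, by omega⟩ : Fin n)) = (⟨(n - ii - 1) + 1, by omega⟩ : Fin n) from
        Fin.ext (show n - ii = n - ii - 1 + 1 by omega)] at h1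
      rw [show U'op n r π (Pi.single ((⟨(n - ii - 1) + 1, by omega⟩ : Fin n), k) (1 : A)) =
        Pi.single ((⟨n - ii - 1, by omega⟩ : Fin n), k) (1 : A) from
        Uop_single_succ π (n - ii - 1) (by omega) k] at h1
      rw [show ((⟨n - ii, by omega⟩ : Fin n)) = (⟨(n - ii - 1) + 1, by omega⟩ : Fin n) from
        Fin.ext (show n - ii = n - ii - 1 + 1 by omega)] at IH'
      exact h1.symm.trans IH'
  -- key membership
  have key : ∀ (i i' : Fin n) (j k : Fin r),
      (Submodule.Quotient.mk
          ((Pi.single (i, j) (1 : A)) ⊗ₜ[A] (Pi.single (i', k) (1 : A)))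
        : quotQ n r p τ c π) ∈ Submodule.span A
      {x : quotQ n r p τ c π | ∃ j k : Fin r, MixedPair p j k ∧
        x = Submodule.Quotient.mk
          ((Pi.single ((⟨1, by omega⟩ : Fin n), j) (1 : A)) ⊗ₜ[A]
            (Pi.single ((⟨n - 1, by omega⟩ : Fin n), k) (1 : A)))} := by
    intro i i' j k
    by_cases hc1 : MixedPair p j k ∧ (i : ℕ) = (n - (i' : ℕ)) % n
    · obtain ⟨hmix, hieq⟩ := hc1
      by_cases hz : (i' : ℕ) = 0
      · have hi0 : (i : ℕ) = 0 := by rw [hieq, hz]; simp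
        rw [show i = (⟨0, by omega⟩ : Fin n) from Fin.ext hi0,
          show i' = (⟨0, by omega⟩ : Fin n) from Fin.ext hz, part2 j k]
        exact Submodule.smul_mem _ _ (Submodule.subset_span ⟨j, k, hmix, rfl⟩)
      · have hmlt : (n - (i' : ℕ)) % n = n - (i' : ℕ) := Nat.mod_eq_of_lt (by omega)
        have hi1 : 1 ≤ (i : ℕ) := by omega
        have h3 : (Submodule.Quotient.mk
            ((Pi.single (i, j) (1 : A)) ⊗ₜ[A]
              (Pi.single ((⟨n - (i : ℕ), by omega⟩ : Fin n), k) (1 : A)))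
          : quotQ n r p τ c π) =
          Submodule.Quotient.mk
            ((Pi.single ((⟨1, by omega⟩ : Fin n), j) (1 : A)) ⊗ₜ[A]
              (Pi.single ((⟨n - 1, by omega⟩ : Fin n), k) (1 : A))) :=
          part3 j k (i : ℕ) hi1 i.isLt
        rw [show i' = (⟨n - (i : ℕ), by omega⟩ : Fin n) from
          Fin.ext (show (i' : ℕ) = n - (i : ℕ) by omega), h3]
        exact Submodule.subset_span ⟨j, k, hmix, rfl⟩
    · set b1 : Bool := decide (p ≤ (j : ℕ)) with hb1
      set b2 : Bool := decide ((k : ℕ) < p) with hb2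
      set i2 : Fin n := ⟨(n - (i' : ℕ)) % n, Nat.mod_lt _ (by omega)⟩ with hi2
      have hne : (i, b1) ≠ (i2, b2) := by
        intro he
        rw [Prod.mk.injEq] at he
        apply hc1
        constructor
        · have hb : (p ≤ (j : ℕ)) ↔ ((k : ℕ) < p) := by
            have := he.2
            rw [hb1, hb2, decide_eq_decide] at this
            exact this
          unfold MixedPair
          by_cases hj : (j : ℕ) < p
          · left
            exact ⟨hj, by by_contra hk2; exact absurd (hb.mpr (by omega)) (by omega)⟩
          · right
            exact ⟨hb.mp (by omega), by omega⟩
        · have := congrArg Fin.val he.1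
          simpa [hi2] using this
      have hu := (hxu i i2 b1 b2 hne).2
      have hk := kill (n := n) (r := r) (p := p) τ c π x i i' j k
      have hmod : ∀ y : A, (⇑τ)^[n - (i' : ℕ)] y = (⇑τ)^[(i2 : ℕ)] y := by
        intro y
        rcases Nat.eq_zero_or_pos (i' : ℕ) with h0 | h0
        · simp only [hi2, h0, Nat.sub_zero, Nat.mod_self]
          exact hτn y
        · simp only [hi2]
          rw [Nat.mod_eq_of_lt (by omega)]
      have e1 : (if (j : ℕ) < p then (⇑τ)^[(i : ℕ)] x else (⇑τ)^[(i : ℕ)] (c x)) =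
          (⇑τ)^[(i : ℕ)] (bif b1 then c x else x) := by
        by_cases hj : (j : ℕ) < p
        · have hbb : b1 = false := by rw [hb1]; simp; omega
          rw [if_pos hj, hbb]; rfl
        · have hbb : b1 = true := by rw [hb1]; simp; omega
          rw [if_neg hj, hbb]; rfl
      have e2 : (if (k : ℕ) < p then (⇑τ)^[n - (i' : ℕ)] (c x)
            else (⇑τ)^[n - (i' : ℕ)] x) =
          (⇑τ)^[(i2 : ℕ)] (bif b2 then c x else x) := by
        by_cases hk2 : (k : ℕ) < p
        · have hbb : b2 = true := by rw [hb2]; simp [hk2]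
          rw [if_pos hk2, hbb, hmod]; rfl
        · have hbb : b2 = false := by rw [hb2]; simp [hk2]
          rw [if_neg hk2, hbb, hmod]; rfl
      rw [e1, e2] at hk
      obtain ⟨u, hueq⟩ := hu
      rw [← hueq] at hk
      have hv : (Submodule.Quotient.mk
          ((Pi.single (i, j) (1 : A)) ⊗ₜ[A] (Pi.single (i', k) (1 : A)))
        : quotQ n r p τ c π) = 0 := by
        calc (Submodule.Quotient.mk
            ((Pi.single (i, j) (1 : A)) ⊗ₜ[A] (Pi.single (i', k) (1 : A)))
          : quotQ n r p τ c π)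
            = ((↑u⁻¹ * ↑u : A)) • (Submodule.Quotient.mk
            ((Pi.single (i, j) (1 : A)) ⊗ₜ[A] (Pi.single (i', k) (1 : A)))
          : quotQ n r p τ c π) := by rw [Units.inv_mul, one_smul]
          _ = (↑u⁻¹ : A) • ((↑u : A) • (Submodule.Quotient.mk
            ((Pi.single (i, j) (1 : A)) ⊗ₜ[A] (Pi.single (i', k) (1 : A)))
          : quotQ n r p τ c π)) := by rw [mul_smul]
          _ = 0 := by rw [hk, smul_zero]
      rw [hv]
      exact Submodule.zero_mem _
  refine ⟨?_, fun j k _ => part2 j k, fun j k hm i hi => part3 j k (i : ℕ) hi i.isLt⟩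
  rw [eq_top_iff]
  rintro y -
  obtain ⟨t, rfl⟩ := Submodule.Quotient.mk_surjective (relN n r p τ c π) y
  induction t using TensorProduct.induction_on with
  | zero => simpa using Submodule.zero_mem _
  | tmul m m' =>
    have hm : m = ∑ q : Fin n × Fin r, m q • (Pi.single q (1 : A) : Fin n × Fin r → A) := by
      conv_lhs => rw [← Finset.univ_sum_single m]
      exact Finset.sum_congr rfl fun q _ => by rw [← Pi.single_smul, smul_eq_mul, mul_one]
    have hm' : m' = ∑ q : Fin n × Fin r, m' q • (Pi.single q (1 : A) : Fin n × Fin r → A) := by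
      conv_lhs => rw [← Finset.univ_sum_single m']
      exact Finset.sum_congr rfl fun q _ => by rw [← Pi.single_smul, smul_eq_mul, mul_one]
    have ht : m ⊗ₜ[A] m' = ∑ q : Fin n × Fin r, ∑ q' : Fin n × Fin r,
        (m q * m' q') • ((Pi.single q (1 : A) : Fin n × Fin r → A) ⊗ₜ[A]
          (Pi.single q' (1 : A) : Fin n × Fin r → A)) := by
      conv_lhs => rw [hm, hm']
      rw [TensorProduct.sum_tmul]
      refine Finset.sum_congr rfl fun q _ => ?_
      rw [TensorProduct.tmul_sum]
      refine Finset.sum_congr rfl fun q' _ => ?_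
      rw [TensorProduct.tmul_smul, ← TensorProduct.smul_tmul', smul_smul, mul_comm]
    rw [ht, ← Submodule.mkQ_apply, map_sum]
    refine Submodule.sum_mem _ fun q _ => ?_
    rw [map_sum]
    refine Submodule.sum_mem _ fun q' _ => ?_
    rw [map_smul]
    exact Submodule.smul_mem _ _ (by rw [Submodule.mkQ_apply]; exact key q.1 q'.1 q.2 q'.2)
  | add s t hs ht =>
    rw [Submodule.Quotient.mk_add]
    exact Submodule.add_mem _ hs ht

end
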